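/- Let X ⊆ ℝ^n be closed and let (c_k)_{k ∈ ℕ} be a sequence of bidifferential operators on ℝ^n with c_0(f,g) = f·g, and define a product ⋆ on the module of formal power series PowerSeries (C^∞(ℝ^n,ℝ)) by (F ⋆ G)_n = Σ_{k+i+j=n} c_k(F_i, G_j); assume ⋆ is associative. Then the set I = { F ∈ PowerSeries (C^∞(ℝ^n,ℝ)) : F_n ∈ J^∞(X) for all n } is a two-sided ideal for ⋆ (an additive subgroup with F ⋆ G ∈ I and G ⋆ F ∈ I whenever F ∈ I and G is arbitrary), and consequently ⋆ induces a well-defined associative product on the quotient PowerSeries(C^∞(ℝ^n,ℝ))/I, which is identified with E^∞(X)[[ħ]] = PowerSeries(C^∞(ℝ^n,ℝ)/J^∞(X)). -/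

import Mathlib

/-!
A bidifferential operator `c(f, g) = Σ a_{αβ} ∂^α f ∂^β g` is a finite sum of products of smooth
functions with derivatives of `f` and `g`. Derivatives of flat functions are flat and `J^∞(X)` is
an ideal of `C^∞(ℝ^n)`, so `c(f, g)` is flat as soon as `f` or `g` is; hence the series with
flat coefficients absorb `⋆` on both sides. On smooth series `⋆` is biadditive, so
`F ⋆ G - F' ⋆ G' = (F - F') ⋆ G + F' ⋆ (G - G')` shows that `⋆` of arbitrary representatives
is well defined modulo flat series, and the associativity of `⋆` descends to the quotient.
-/

open scoped ContDiff

noncomputable section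

/-- A smooth function `f : ℝ^n → ℝ` is *flat* on `X` if all its iterated
(Fréchet) derivatives vanish at every point of `X`. -/
def IsFlatOn {n : ℕ} (X : Set (Fin n → ℝ)) (f : (Fin n → ℝ) → ℝ) : Prop :=
  ∀ k : ℕ, ∀ x ∈ X, iteratedFDeriv ℝ k f x = 0

/-- The `i`-th partial derivative `∂_i f`. -/
def partialDeriv {n : ℕ} (i : Fin n) (f : (Fin n → ℝ) → ℝ) :
    (Fin n → ℝ) → ℝ :=
  fun x => fderiv ℝ f x (Pi.single i 1)

/-- The iterated partial derivative `∂^α f` associated to a multi-index `α`. -/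
def multiPartialDeriv {n : ℕ} (α : Fin n → ℕ) (f : (Fin n → ℝ) → ℝ) :
    (Fin n → ℝ) → ℝ :=
  (List.finRange n).foldr (fun i g => (partialDeriv i)^[α i] g) f

/-- The bidifferential operator `c(f,g) = Σ_{(α,β) ∈ S} a_{αβ} · ∂^α f · ∂^β g`. -/
def biDiffOp {n : ℕ} (S : Finset ((Fin n → ℕ) × (Fin n → ℕ)))
    (a : (Fin n → ℕ) × (Fin n → ℕ) → (Fin n → ℝ) → ℝ)
    (f g : (Fin n → ℝ) → ℝ) : (Fin n → ℝ) → ℝ :=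
  fun x => ∑ p ∈ S, a p x * multiPartialDeriv p.1 f x * multiPartialDeriv p.2 g x

/-- A formal power series with coefficients in `C^∞(ℝ^n,ℝ)` is encoded by its
sequence of coefficients.  Given bidifferential operators `c_k`, the star product
is `(F ⋆ G)_m = Σ_{k+i+j=m} c_k (F_i, G_j)`. -/
def starProd {n : ℕ}
    (c : ℕ → ((Fin n → ℝ) → ℝ) → ((Fin n → ℝ) → ℝ) → ((Fin n → ℝ) → ℝ))
    (F G : ℕ → (Fin n → ℝ) → ℝ) : ℕ → (Fin n → ℝ) → ℝ :=
  fun m => ∑ p ∈ Finset.HasAntidiagonal.antidiagonal m, ∑ q ∈ Finset.HasAntidiagonal.antidiagonal p.2,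
    c p.1 (F q.1) (G q.2)

/-- Membership in `J^∞(X)[[ħ]]`: all coefficients are smooth and flat on `X`. -/
def MemIseq {n : ℕ} (X : Set (Fin n → ℝ)) (F : ℕ → (Fin n → ℝ) → ℝ) : Prop :=
  ∀ m, ContDiff ℝ ∞ (F m) ∧ IsFlatOn X (F m)

/-- The ℝ-algebra `C^∞(ℝ^n, ℝ)` of smooth functions. -/
def smoothAlg (n : ℕ) : Subalgebra ℝ ((Fin n → ℝ) → ℝ) where
  carrier := {f | ContDiff ℝ ∞ f}
  mul_mem' {f g} hf hg := by
    exact ContDiff.mul (show ContDiff ℝ ∞ f from hf) (show ContDiff ℝ ∞ g from hg)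
  add_mem' {f g} hf hg := by
    exact (show ContDiff ℝ ∞ f from hf).add (show ContDiff ℝ ∞ g from hg)
  algebraMap_mem' r := by
    show ContDiff ℝ ∞ (fun _ : Fin n → ℝ => r)
    exact contDiff_const

theorem mem_smoothAlg {n : ℕ} {f : (Fin n → ℝ) → ℝ} (hf : f ∈ smoothAlg n) :
    ContDiff ℝ ∞ f := hf

/-- The ideal `J^∞(X)` of smooth functions flat on `X`. -/
def flatIdeal (n : ℕ) (X : Set (Fin n → ℝ)) : Ideal (smoothAlg n) where
  carrier := {f | IsFlatOn X (f : (Fin n → ℝ) → ℝ)}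
  zero_mem' := by
    intro k x _
    show iteratedFDeriv ℝ k (fun _ => (0 : ℝ)) x = 0
    rw [iteratedFDeriv_zero_fun]; rfl
  add_mem' := by
    intro f g hf hg k x hx
    show iteratedFDeriv ℝ k
      (fun y => (f : (Fin _ → ℝ) → ℝ) y + (g : (Fin _ → ℝ) → ℝ) y) x = 0
    rw [iteratedFDeriv_add_apply' ((mem_smoothAlg f.2).of_le (by exact_mod_cast le_top)).contDiffAt
      ((mem_smoothAlg g.2).of_le (by exact_mod_cast le_top)).contDiffAt, hf k x hx, hg k x hx, add_zero]
  smul_mem' := by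
    intro c f hf k x hx
    show iteratedFDeriv ℝ k
      (fun y => (c : (Fin _ → ℝ) → ℝ) y * (f : (Fin _ → ℝ) → ℝ) y) x = 0
    rw [← norm_le_zero_iff]
    refine le_trans (norm_iteratedFDeriv_mul_le (mem_smoothAlg c.2) (mem_smoothAlg f.2) x
      (by exact_mod_cast le_top)) ?_
    apply le_of_eq
    refine Finset.sum_eq_zero fun i _ => ?_
    rw [hf (k - i) x hx]
    simp

/-- The algebra `E^∞(X) = C^∞(ℝ^n,ℝ)/J^∞(X)` of Whitney functions on `X`. -/
abbrev Whitney (n : ℕ) (X : Set (Fin n → ℝ)) := smoothAlg n ⧸ flatIdeal n X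

section Flatness

variable {n : ℕ} {X : Set (Fin n → ℝ)} {f g : (Fin n → ℝ) → ℝ}

theorem IsFlatOn.zero : IsFlatOn X (0 : (Fin n → ℝ) → ℝ) :=
  (flatIdeal n X).zero_mem

theorem IsFlatOn.add (hf : ContDiff ℝ ∞ f) (hg : ContDiff ℝ ∞ g)
    (hfl : IsFlatOn X f) (hgl : IsFlatOn X g) : IsFlatOn X (f + g) :=
  (flatIdeal n X).add_mem (a := ⟨f, hf⟩) (b := ⟨g, hg⟩) hfl hgl

theorem IsFlatOn.neg (hf : ContDiff ℝ ∞ f) (hfl : IsFlatOn X f) :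
    IsFlatOn X (-f) :=
  (flatIdeal n X).neg_mem (x := ⟨f, hf⟩) hfl

theorem IsFlatOn.mul_left (hf : ContDiff ℝ ∞ f) (hg : ContDiff ℝ ∞ g)
    (hgl : IsFlatOn X g) : IsFlatOn X (f * g) :=
  (flatIdeal n X).mul_mem_left ⟨f, hf⟩ (b := ⟨g, hg⟩) hgl

theorem IsFlatOn.mul_right (hf : ContDiff ℝ ∞ f) (hg : ContDiff ℝ ∞ g)
    (hfl : IsFlatOn X f) : IsFlatOn X (f * g) :=
  (flatIdeal n X).mul_mem_right ⟨g, hg⟩ (a := ⟨f, hf⟩) hfl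

theorem IsFlatOn.sum {ι : Type*} {s : Finset ι} {u : ι → (Fin n → ℝ) → ℝ}
    (hu : ∀ i ∈ s, ContDiff ℝ ∞ (u i)) (hul : ∀ i ∈ s, IsFlatOn X (u i)) :
    IsFlatOn X (∑ i ∈ s, u i) := by
  intro k x hx
  rw [iteratedFDeriv_sum_apply fun i hi => (hu i hi).contDiffAt.of_le (by exact_mod_cast le_top)]
  exact Finset.sum_eq_zero fun i hi => hul i hi k x hx

end Flatness

section IteratedOperators

variable {ι E : Type*} {s : Set E} {D : ι → E → E}

theorem Set.MapsTo.foldr_iterate (hD : ∀ i, Set.MapsTo (D i) s s) (l : List ι) (α : ι → ℕ) :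
    Set.MapsTo (fun f => l.foldr (fun i g => (D i)^[α i] g) f) s s := by
  induction l with
  | nil => exact Set.mapsTo_id s
  | cons i l ih => exact ((hD i).iterate (α i)).comp ih

variable [Add E]

theorem iterate_add_of_mapsTo {T : E → E} (hT : Set.MapsTo T s s)
    (hadd : ∀ f ∈ s, ∀ g ∈ s, T (f + g) = T f + T g) (k : ℕ) {f g : E} (hf : f ∈ s)
    (hg : g ∈ s) : T^[k] (f + g) = T^[k] f + T^[k] g := by
  induction k with
  | zero => rfl
  | succ k ih =>
    rw [Function.iterate_succ_apply', Function.iterate_succ_apply', Function.iterate_succ_apply',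
      ih, hadd _ (hT.iterate k hf) _ (hT.iterate k hg)]

theorem List.foldr_iterate_add_of_mapsTo (hD : ∀ i, Set.MapsTo (D i) s s)
    (hadd : ∀ i, ∀ f ∈ s, ∀ g ∈ s, D i (f + g) = D i f + D i g) (l : List ι) (α : ι → ℕ)
    {f g : E} (hf : f ∈ s) (hg : g ∈ s) :
    l.foldr (fun i h => (D i)^[α i] h) (f + g)
      = l.foldr (fun i h => (D i)^[α i] h) f + l.foldr (fun i h => (D i)^[α i] h) g := by
  induction l with
  | nil => rfl
  | cons i l ih =>
    rw [List.foldr_cons, List.foldr_cons, List.foldr_cons, ih]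
    exact iterate_add_of_mapsTo (hD i) (hadd i) (α i)
      (Set.MapsTo.foldr_iterate hD l α hf) (Set.MapsTo.foldr_iterate hD l α hg)

end IteratedOperators

section PartialDerivatives

variable {n : ℕ} {X : Set (Fin n → ℝ)} {f g : (Fin n → ℝ) → ℝ}

theorem ContDiff.partialDeriv (hf : ContDiff ℝ ∞ f) (i : Fin n) :
    ContDiff ℝ ∞ (partialDeriv i f) :=
  (contDiff_infty_iff_fderiv.mp hf).2.clm_apply contDiff_const

theorem IsFlatOn.partialDeriv (hf : ContDiff ℝ ∞ f) (hfl : IsFlatOn X f)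
    (i : Fin n) : IsFlatOn X (partialDeriv i f) := by
  intro k x hx
  have hflat : iteratedFDeriv ℝ k (fderiv ℝ f) x = 0 := by
    rw [← norm_eq_zero, norm_iteratedFDeriv_fderiv, hfl (k + 1) x hx, norm_zero]
  have hcomp :
      _root_.partialDeriv i f = ContinuousLinearMap.apply ℝ ℝ (Pi.single i 1) ∘ fderiv ℝ f :=
    rfl
  rw [hcomp, ContinuousLinearMap.iteratedFDeriv_comp_left _
    (contDiff_infty_iff_fderiv.mp hf).2.contDiffAt (by exact_mod_cast le_top), hflat]
  ext
  simp

theorem partialDeriv_add (hf : ContDiff ℝ ∞ f) (hg : ContDiff ℝ ∞ g)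
    (i : Fin n) : partialDeriv i (f + g) = partialDeriv i f + partialDeriv i g := by
  funext x
  simp only [partialDeriv, Pi.add_apply]
  rw [fderiv_add (hf.differentiable (by simp)).differentiableAt
    (hg.differentiable (by simp)).differentiableAt]
  rfl

theorem ContDiff.multiPartialDeriv (hf : ContDiff ℝ ∞ f)
    (α : Fin n → ℕ) : ContDiff ℝ ∞ (multiPartialDeriv α f) :=
  Set.MapsTo.foldr_iterate (s := {g | ContDiff ℝ ∞ g}) (fun i _ hg => hg.partialDeriv i) _ α hf

theorem IsFlatOn.multiPartialDeriv (hf : ContDiff ℝ ∞ f)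
    (hfl : IsFlatOn X f) (α : Fin n → ℕ) : IsFlatOn X (multiPartialDeriv α f) :=
  (Set.MapsTo.foldr_iterate (s := {g | ContDiff ℝ ∞ g ∧ IsFlatOn X g})
    (fun i _ hg => ⟨hg.1.partialDeriv i, hg.2.partialDeriv hg.1 i⟩) _ α ⟨hf, hfl⟩).2

theorem multiPartialDeriv_add (hf : ContDiff ℝ ∞ f)
    (hg : ContDiff ℝ ∞ g) (α : Fin n → ℕ) :
    multiPartialDeriv α (f + g) = multiPartialDeriv α f + multiPartialDeriv α g :=
  List.foldr_iterate_add_of_mapsTo (s := {g | ContDiff ℝ ∞ g})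
    (fun i _ hg => hg.partialDeriv i) (fun i _ hf _ hg => partialDeriv_add hf hg i) _ α hf hg

end PartialDerivatives

section BiDifferentialOperators

variable {n : ℕ} {X : Set (Fin n → ℝ)} {S : Finset ((Fin n → ℕ) × (Fin n → ℕ))}
  {a : (Fin n → ℕ) × (Fin n → ℕ) → (Fin n → ℝ) → ℝ} {f f' g g' : (Fin n → ℝ) → ℝ}

theorem biDiffOp_eq_sum :
    biDiffOp S a f g = ∑ p ∈ S, a p * multiPartialDeriv p.1 f * multiPartialDeriv p.2 g := by
  funext x
  simp [biDiffOp, Finset.sum_apply]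

theorem contDiff_biDiffOp (ha : ∀ p, ContDiff ℝ ∞ (a p)) (hf : ContDiff ℝ ∞ f)
    (hg : ContDiff ℝ ∞ g) : ContDiff ℝ ∞ (biDiffOp S a f g) :=
  ContDiff.sum fun p _ => ((ha p).mul (hf.multiPartialDeriv p.1)).mul (hg.multiPartialDeriv p.2)

theorem IsFlatOn.biDiffOp_left (ha : ∀ p, ContDiff ℝ ∞ (a p)) (hf : ContDiff ℝ ∞ f)
    (hg : ContDiff ℝ ∞ g) (hfl : IsFlatOn X f) : IsFlatOn X (biDiffOp S a f g) := by
  rw [biDiffOp_eq_sum]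
  refine IsFlatOn.sum (fun p _ => ((ha p).mul (hf.multiPartialDeriv p.1)).mul
    (hg.multiPartialDeriv p.2)) fun p _ => ?_
  exact (((hfl.multiPartialDeriv hf p.1).mul_left (ha p) (hf.multiPartialDeriv p.1)).mul_right
    ((ha p).mul (hf.multiPartialDeriv p.1)) (hg.multiPartialDeriv p.2))

theorem IsFlatOn.biDiffOp_right (ha : ∀ p, ContDiff ℝ ∞ (a p)) (hf : ContDiff ℝ ∞ f)
    (hg : ContDiff ℝ ∞ g) (hgl : IsFlatOn X g) : IsFlatOn X (biDiffOp S a f g) := by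
  rw [biDiffOp_eq_sum]
  exact IsFlatOn.sum (fun p _ => ((ha p).mul (hf.multiPartialDeriv p.1)).mul
    (hg.multiPartialDeriv p.2)) fun p _ => (hgl.multiPartialDeriv hg p.2).mul_left
      ((ha p).mul (hf.multiPartialDeriv p.1)) (hg.multiPartialDeriv p.2)

theorem biDiffOp_add_left (hf : ContDiff ℝ ∞ f) (hf' : ContDiff ℝ ∞ f') :
    biDiffOp S a (f + f') g = biDiffOp S a f g + biDiffOp S a f' g := by
  simp only [biDiffOp_eq_sum, multiPartialDeriv_add hf hf', mul_add, add_mul,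
    Finset.sum_add_distrib]

theorem biDiffOp_add_right (hg : ContDiff ℝ ∞ g) (hg' : ContDiff ℝ ∞ g') :
    biDiffOp S a f (g + g') = biDiffOp S a f g + biDiffOp S a f g' := by
  simp only [biDiffOp_eq_sum, multiPartialDeriv_add hg hg', mul_add, Finset.sum_add_distrib]

theorem biDiffOp_sub_left (hf : ContDiff ℝ ∞ f) (hf' : ContDiff ℝ ∞ f') :
    biDiffOp S a (f - f') g = biDiffOp S a f g - biDiffOp S a f' g := by
  rw [eq_sub_iff_add_eq, ← biDiffOp_add_left (f := f - f') (hf.sub hf') hf', sub_add_cancel]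

theorem biDiffOp_sub_right (hg : ContDiff ℝ ∞ g) (hg' : ContDiff ℝ ∞ g') :
    biDiffOp S a f (g - g') = biDiffOp S a f g - biDiffOp S a f g' := by
  rw [eq_sub_iff_add_eq, ← biDiffOp_add_right (g := g - g') (hg.sub hg') hg', sub_add_cancel]

end BiDifferentialOperators

section StarProduct

variable {n : ℕ} {X : Set (Fin n → ℝ)}
  {c : ℕ → ((Fin n → ℝ) → ℝ) → ((Fin n → ℝ) → ℝ) → ((Fin n → ℝ) → ℝ)}
  {F F' G G' : ℕ → (Fin n → ℝ) → ℝ}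

theorem contDiff_starProd (h : ∀ k i j, ContDiff ℝ ∞ (c k (F i) (G j))) (m : ℕ) :
    ContDiff ℝ ∞ (starProd c F G m) :=
  (smoothAlg n).sum_mem fun p _ => (smoothAlg n).sum_mem fun q _ => h p.1 q.1 q.2

theorem IsFlatOn.starProd (hsm : ∀ k i j, ContDiff ℝ ∞ (c k (F i) (G j)))
    (hfl : ∀ k i j, IsFlatOn X (c k (F i) (G j))) (m : ℕ) : IsFlatOn X (starProd c F G m) :=
  IsFlatOn.sum (fun p _ => (smoothAlg n).sum_mem fun q _ => hsm p.1 q.1 q.2)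
    fun p _ => IsFlatOn.sum (fun q _ => hsm p.1 q.1 q.2) fun q _ => hfl p.1 q.1 q.2

theorem starProd_sub_left
    (h : ∀ k i j, c k (F i - F' i) (G j) = c k (F i) (G j) - c k (F' i) (G j)) :
    starProd c (F - F') G = starProd c F G - starProd c F' G := by
  funext m
  simp only [starProd, Pi.sub_apply, h, Finset.sum_sub_distrib]

theorem starProd_sub_right
    (h : ∀ k i j, c k (F i) (G j - G' j) = c k (F i) (G j) - c k (F i) (G' j)) :
    starProd c F (G - G') = starProd c F G - starProd c F G' := by
  funext m
  simp only [starProd, Pi.sub_apply, h, Finset.sum_sub_distrib]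

end StarProduct

section StarIdeal

variable {n : ℕ} {X : Set (Fin n → ℝ)} {S : ℕ → Finset ((Fin n → ℕ) × (Fin n → ℕ))}
  {a : ℕ → (Fin n → ℕ) × (Fin n → ℕ) → (Fin n → ℝ) → ℝ} {F F' G G' : ℕ → (Fin n → ℝ) → ℝ}

theorem MemIseq.zero : MemIseq X (0 : ℕ → (Fin n → ℝ) → ℝ) :=
  fun _ => ⟨contDiff_const, IsFlatOn.zero⟩

theorem MemIseq.add (hF : MemIseq X F) (hG : MemIseq X G) : MemIseq X (F + G) :=
  fun m => ⟨(hF m).1.add (hG m).1, (hF m).2.add (hF m).1 (hG m).1 (hG m).2⟩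

theorem MemIseq.neg (hF : MemIseq X F) : MemIseq X (-F) :=
  fun m => ⟨(hF m).1.neg, (hF m).2.neg (hF m).1⟩

theorem contDiff_starProd_biDiffOp (ha : ∀ k p, ContDiff ℝ ∞ (a k p))
    (hF : ∀ m, ContDiff ℝ ∞ (F m)) (hG : ∀ m, ContDiff ℝ ∞ (G m)) (m : ℕ) :
    ContDiff ℝ ∞ (starProd (fun k => biDiffOp (S k) (a k)) F G m) :=
  contDiff_starProd (fun k i j => contDiff_biDiffOp (ha k) (hF i) (hG j)) m

theorem MemIseq.starProd_left (ha : ∀ k p, ContDiff ℝ ∞ (a k p)) (hF : MemIseq X F)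
    (hG : ∀ m, ContDiff ℝ ∞ (G m)) : MemIseq X (starProd (fun k => biDiffOp (S k) (a k)) F G) :=
  fun m => ⟨contDiff_starProd_biDiffOp ha (fun i => (hF i).1) hG m,
    IsFlatOn.starProd (fun k i j => contDiff_biDiffOp (ha k) (hF i).1 (hG j))
      (fun k i j => (hF i).2.biDiffOp_left (ha k) (hF i).1 (hG j)) m⟩

theorem MemIseq.starProd_right (ha : ∀ k p, ContDiff ℝ ∞ (a k p)) (hF : MemIseq X F)
    (hG : ∀ m, ContDiff ℝ ∞ (G m)) : MemIseq X (starProd (fun k => biDiffOp (S k) (a k)) G F) :=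
  fun m => ⟨contDiff_starProd_biDiffOp ha hG (fun i => (hF i).1) m,
    IsFlatOn.starProd (fun k i j => contDiff_biDiffOp (ha k) (hG i) (hF j).1)
      (fun k i j => (hF j).2.biDiffOp_right (ha k) (hG i) (hF j).1) m⟩

theorem MemIseq.starProd_sub_starProd (ha : ∀ k p, ContDiff ℝ ∞ (a k p))
    (hF : ∀ m, ContDiff ℝ ∞ (F m)) (hF' : ∀ m, ContDiff ℝ ∞ (F' m))
    (hG : ∀ m, ContDiff ℝ ∞ (G m)) (hG' : ∀ m, ContDiff ℝ ∞ (G' m))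
    (hFF' : MemIseq X (F - F')) (hGG' : MemIseq X (G - G')) :
    MemIseq X (starProd (fun k => biDiffOp (S k) (a k)) F G
      - starProd (fun k => biDiffOp (S k) (a k)) F' G') := by
  have hsplit : starProd (fun k => biDiffOp (S k) (a k)) F G
      - starProd (fun k => biDiffOp (S k) (a k)) F' G'
      = starProd (fun k => biDiffOp (S k) (a k)) (F - F') G
        + starProd (fun k => biDiffOp (S k) (a k)) F' (G - G') := by
    rw [starProd_sub_left fun k i j => biDiffOp_sub_left (hF i) (hF' i),
      starProd_sub_right fun k i j => biDiffOp_sub_right (hG j) (hG' j)]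
    abel
  rw [hsplit]
  exact (hFF'.starProd_left ha hG).add (hGG'.starProd_right ha hF')

end StarIdeal

section WhitneyQuotient

variable {n : ℕ} {X : Set (Fin n → ℝ)} {S : ℕ → Finset ((Fin n → ℕ) × (Fin n → ℕ))}
  {a : ℕ → (Fin n → ℕ) × (Fin n → ℕ) → (Fin n → ℝ) → ℝ}

variable (S) in
def smoothStar (ha : ∀ k p, ContDiff ℝ ∞ (a k p)) (F G : ℕ → smoothAlg n) :
    ℕ → smoothAlg n :=
  fun m => ⟨starProd (fun k => biDiffOp (S k) (a k)) (fun i => F i) (fun j => G j) m,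
    contDiff_starProd_biDiffOp ha (fun i => (F i).2) (fun j => (G j).2) m⟩

theorem smoothStar_assoc (ha : ∀ k p, ContDiff ℝ ∞ (a k p))
    (hassoc : ∀ F G H : ℕ → (Fin n → ℝ) → ℝ,
      (∀ m, ContDiff ℝ ∞ (F m)) → (∀ m, ContDiff ℝ ∞ (G m)) → (∀ m, ContDiff ℝ ∞ (H m)) →
      starProd (fun k => biDiffOp (S k) (a k)) (starProd (fun k => biDiffOp (S k) (a k)) F G) H
        = starProd (fun k => biDiffOp (S k) (a k)) F
            (starProd (fun k => biDiffOp (S k) (a k)) G H))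
    (F G H : ℕ → smoothAlg n) :
    smoothStar S ha (smoothStar S ha F G) H = smoothStar S ha F (smoothStar S ha G H) :=
  funext fun m => Subtype.ext <| congrFun
    (hassoc _ _ _ (fun i => (F i).2) (fun j => (G j).2) (fun l => (H l).2)) m

theorem mk_smoothStar_congr (ha : ∀ k p, ContDiff ℝ ∞ (a k p)) {F F' G G' : ℕ → smoothAlg n}
    (hF : ∀ m, Ideal.Quotient.mk (flatIdeal n X) (F m) = Ideal.Quotient.mk _ (F' m))
    (hG : ∀ m, Ideal.Quotient.mk (flatIdeal n X) (G m) = Ideal.Quotient.mk _ (G' m)) (m : ℕ) :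
    Ideal.Quotient.mk (flatIdeal n X) (smoothStar S ha F G m)
      = Ideal.Quotient.mk _ (smoothStar S ha F' G' m) := by
  have hFF' :
      MemIseq X ((fun i => (F i : (Fin n → ℝ) → ℝ)) - fun i => (F' i : (Fin n → ℝ) → ℝ)) :=
    fun i => ⟨(F i - F' i).2, Ideal.Quotient.eq.mp (hF i)⟩
  have hGG' :
      MemIseq X ((fun j => (G j : (Fin n → ℝ) → ℝ)) - fun j => (G' j : (Fin n → ℝ) → ℝ)) :=
    fun j => ⟨(G j - G' j).2, Ideal.Quotient.eq.mp (hG j)⟩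
  rw [Ideal.Quotient.eq]
  exact (hFF'.starProd_sub_starProd ha (fun i => (F i).2)
    (fun i => (F' i).2) (fun j => (G j).2) (fun j => (G' j).2) hGG' m).2

variable (S) in
def whitneyStar (ha : ∀ k p, ContDiff ℝ ∞ (a k p)) (A B : ℕ → Whitney n X) :
    ℕ → Whitney n X :=
  fun m => Ideal.Quotient.mk _ (smoothStar S ha (fun i => (A i).out) (fun j => (B j).out) m)

theorem whitneyStar_mk (ha : ∀ k p, ContDiff ℝ ∞ (a k p)) (F G : ℕ → smoothAlg n) :
    whitneyStar S ha (Ideal.Quotient.mk (flatIdeal n X) ∘ F) (Ideal.Quotient.mk _ ∘ G)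
      = Ideal.Quotient.mk _ ∘ smoothStar S ha F G :=
  funext <| mk_smoothStar_congr ha (fun _ => Ideal.Quotient.mk_out _)
    (fun _ => Ideal.Quotient.mk_out _)

theorem whitneyStar_assoc (ha : ∀ k p, ContDiff ℝ ∞ (a k p))
    (hassoc : ∀ F G H : ℕ → (Fin n → ℝ) → ℝ,
      (∀ m, ContDiff ℝ ∞ (F m)) → (∀ m, ContDiff ℝ ∞ (G m)) → (∀ m, ContDiff ℝ ∞ (H m)) →
      starProd (fun k => biDiffOp (S k) (a k)) (starProd (fun k => biDiffOp (S k) (a k)) F G) H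
        = starProd (fun k => biDiffOp (S k) (a k)) F
            (starProd (fun k => biDiffOp (S k) (a k)) G H))
    (A B C : ℕ → Whitney n X) :
    whitneyStar S ha (whitneyStar S ha A B) C = whitneyStar S ha A (whitneyStar S ha B C) := by
  have hlift := Ideal.Quotient.mk_surjective (I := flatIdeal n X).comp_left (α := ℕ)
  obtain ⟨F, rfl⟩ := hlift A
  obtain ⟨G, rfl⟩ := hlift B
  obtain ⟨H, rfl⟩ := hlift C
  simp only [whitneyStar_mk, smoothStar_assoc ha hassoc]

end WhitneyQuotient

theorem star_product_descends_to_whitney_general (n : ℕ) (X : Set (Fin n → ℝ))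
    (S : ℕ → Finset ((Fin n → ℕ) × (Fin n → ℕ)))
    (a : ℕ → (Fin n → ℕ) × (Fin n → ℕ) → (Fin n → ℝ) → ℝ)
    (ha : ∀ k p, ContDiff ℝ ∞ (a k p))
    (hassoc : ∀ F G H : ℕ → (Fin n → ℝ) → ℝ,
      (∀ m, ContDiff ℝ ∞ (F m)) → (∀ m, ContDiff ℝ ∞ (G m)) → (∀ m, ContDiff ℝ ∞ (H m)) →
      starProd (fun k => biDiffOp (S k) (a k)) (starProd (fun k => biDiffOp (S k) (a k)) F G) H
        = starProd (fun k => biDiffOp (S k) (a k)) F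
            (starProd (fun k => biDiffOp (S k) (a k)) G H)) :
    -- `I` is an additive subgroup ...
    MemIseq X (0 : ℕ → (Fin n → ℝ) → ℝ) ∧
    (∀ F G, MemIseq X F → MemIseq X G → MemIseq X (F + G)) ∧
    (∀ F, MemIseq X F → MemIseq X (-F)) ∧
    -- ... which absorbs ⋆-multiplication on both sides ...
    (∀ F G : ℕ → (Fin n → ℝ) → ℝ, MemIseq X F → (∀ m, ContDiff ℝ ∞ (G m)) →
      MemIseq X (starProd (fun k => biDiffOp (S k) (a k)) F G) ∧
      MemIseq X (starProd (fun k => biDiffOp (S k) (a k)) G F)) ∧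
    -- ... and consequently ⋆ induces a well-defined associative product on the quotient
    (∃ starW : (ℕ → Whitney n X) → (ℕ → Whitney n X) → (ℕ → Whitney n X),
      (∀ A B C : ℕ → Whitney n X, starW (starW A B) C = starW A (starW B C)) ∧
      (∀ (F G : ℕ → smoothAlg n)
        (h : ∀ m, starProd (fun k => biDiffOp (S k) (a k))
            (fun i => (F i : (Fin n → ℝ) → ℝ)) (fun j => (G j : (Fin n → ℝ) → ℝ)) m
          ∈ smoothAlg n),
        starW (fun m => Ideal.Quotient.mk (flatIdeal n X) (F m))
            (fun m => Ideal.Quotient.mk (flatIdeal n X) (G m))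
          = fun m => Ideal.Quotient.mk (flatIdeal n X)
              ⟨starProd (fun k => biDiffOp (S k) (a k))
                (fun i => (F i : (Fin n → ℝ) → ℝ)) (fun j => (G j : (Fin n → ℝ) → ℝ)) m,
               h m⟩)) :=
  ⟨MemIseq.zero, fun _ _ hF hG => hF.add hG, fun _ hF => hF.neg,
    fun _ _ hF hG => ⟨hF.starProd_left ha hG, hF.starProd_right ha hG⟩,
    whitneyStar S ha, whitneyStar_assoc ha hassoc, fun F G _ => whitneyStar_mk ha F G⟩

/-- For a closed `X ⊆ ℝ^n` and a star product `⋆` built from bidifferential operators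
`c_k` with `c_0` the pointwise product, assumed associative, the series with all
coefficients in `J^∞(X)` form a two-sided ideal for `⋆`, and `⋆` induces a
well-defined associative product on the quotient, identified with
`E^∞(X)[[ħ]] = PowerSeries (C^∞(ℝ^n,ℝ)/J^∞(X))` (encoded here as coefficient
sequences `ℕ → E^∞(X)`). -/
theorem star_product_descends_to_whitney (n : ℕ) (X : Set (Fin n → ℝ)) (hX : IsClosed X)
    (S : ℕ → Finset ((Fin n → ℕ) × (Fin n → ℕ)))
    (a : ℕ → (Fin n → ℕ) × (Fin n → ℕ) → (Fin n → ℝ) → ℝ)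
    (ha : ∀ k p, ContDiff ℝ ∞ (a k p))
    (hc0 : ∀ f g : (Fin n → ℝ) → ℝ, biDiffOp (S 0) (a 0) f g = f * g)
    (hassoc : ∀ F G H : ℕ → (Fin n → ℝ) → ℝ,
      (∀ m, ContDiff ℝ ∞ (F m)) → (∀ m, ContDiff ℝ ∞ (G m)) → (∀ m, ContDiff ℝ ∞ (H m)) →
      starProd (fun k => biDiffOp (S k) (a k)) (starProd (fun k => biDiffOp (S k) (a k)) F G) H
        = starProd (fun k => biDiffOp (S k) (a k)) F
            (starProd (fun k => biDiffOp (S k) (a k)) G H)) :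
    -- `I` is an additive subgroup ...
    MemIseq X (0 : ℕ → (Fin n → ℝ) → ℝ) ∧
    (∀ F G, MemIseq X F → MemIseq X G → MemIseq X (F + G)) ∧
    (∀ F, MemIseq X F → MemIseq X (-F)) ∧
    -- ... which absorbs ⋆-multiplication on both sides ...
    (∀ F G : ℕ → (Fin n → ℝ) → ℝ, MemIseq X F → (∀ m, ContDiff ℝ ∞ (G m)) →
      MemIseq X (starProd (fun k => biDiffOp (S k) (a k)) F G) ∧
      MemIseq X (starProd (fun k => biDiffOp (S k) (a k)) G F)) ∧
    -- ... and consequently ⋆ induces a well-defined associative product on the quotient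
    (∃ starW : (ℕ → Whitney n X) → (ℕ → Whitney n X) → (ℕ → Whitney n X),
      (∀ A B C : ℕ → Whitney n X, starW (starW A B) C = starW A (starW B C)) ∧
      (∀ (F G : ℕ → smoothAlg n)
        (h : ∀ m, starProd (fun k => biDiffOp (S k) (a k))
            (fun i => (F i : (Fin n → ℝ) → ℝ)) (fun j => (G j : (Fin n → ℝ) → ℝ)) m
          ∈ smoothAlg n),
        starW (fun m => Ideal.Quotient.mk (flatIdeal n X) (F m))
            (fun m => Ideal.Quotient.mk (flatIdeal n X) (G m))
          = fun m => Ideal.Quotient.mk (flatIdeal n X)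
              ⟨starProd (fun k => biDiffOp (S k) (a k))
                (fun i => (F i : (Fin n → ℝ) → ℝ)) (fun j => (G j : (Fin n → ℝ) → ℝ)) m,
               h m⟩)) :=
  star_product_descends_to_whitney_general n X S a ha hassoc
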